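/- Let τ > ν−1, γ ∈ (0,1), λ ≥ 1, β ∈ ℝ, θ < 1 with λ^{θ−1}γ^{−1} ≤ 1. Let μ_∞(j;ω) = iβ j₁/|j|² + z_∞(j;ω), j ∈ ℤ²∖{0}, with sup_ω |z_∞(j;ω)| ≤ C λ^θ |j|^{−1} and |z_∞(j;ω₁) − z_∞(j;ω₂)| ≤ C λ^θ γ^{−1} |j|^{−1} |ω₁−ω₂|, and define Λ_∞^γ := {ω ∈ DC(2γ,τ) : |iλ ω·ℓ + μ_∞(j;ω)| ≥ 2λγ ⟨ℓ⟩^{−τ} for all ℓ ∈ ℤ^ν, j ∈ ℤ²∖{0} with π^⊤(ℓ)+j = 0}. For ω ∈ Λ_∞^γ define (L_∞^{−1}h)(φ,x) := Σ_{ℓ∈ℤ^ν∖{0}, j∈ℤ²∖{0}, π^⊤(ℓ)+j=0} (iλ ω·ℓ + μ_∞(j;ω))^{−1} ĥ(ℓ,j) e^{i(ℓ·φ+j·x)} for quasi-periodic traveling waves h with zero average in x. Then L_∞^{−1}h is a quasi-periodic traveling wave, (λ ω·∂_φ + D_∞)(L_∞^{−1}h) = h where D_∞ := diag_{j≠0}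 μ_∞(j), and for every s ≥ 0: ‖L_∞^{−1}h‖_s ≤ C' λ^{−1} γ^{−1} ‖h‖_{s+τ} for each fixed ω ∈ Λ_∞^γ, and for families h(·;ω), ‖L_∞^{−1}h‖_s^{Lip(γ)} ≤ C' λ^{−1} γ^{−1} ‖h‖_{s+2τ+1}^{Lip(γ)}. -/

import Mathlib

open scoped ENNReal NNReal BigOperators Classical
open MeasureTheory

namespace BetaPlane

abbrev Zn (n : ℕ) := Fin n → ℤ
abbrev Z2 := Fin 2 → ℤ
abbrev Idx (ν : ℕ) := Zn ν × Z2

/-- Euclidean norm of an integer vector. -/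
noncomputable def znorm {n : ℕ} (ℓ : Fin n → ℤ) : ℝ :=
  Real.sqrt (∑ i, ((ℓ i : ℝ)) ^ 2)

/-- Euclidean norm of a real vector. -/
noncomputable def rnorm {n : ℕ} (ω : Fin n → ℝ) : ℝ :=
  Real.sqrt (∑ i, (ω i) ^ 2)

/-- `⟨ℓ,j⟩ := max {1, |ℓ|, |j|}`. -/
noncomputable def wt {ν : ℕ} (p : Idx ν) : ℝ := max 1 (max (znorm p.1) (znorm p.2))

/-- `⟨ℓ⟩ := max {1, |ℓ|}`. -/
noncomputable def bwt {n : ℕ} (ℓ : Fin n → ℤ) : ℝ := max 1 (znorm ℓ)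

noncomputable def ωdot {n : ℕ} (ω : Fin n → ℝ) (ℓ : Fin n → ℤ) : ℝ := ∑ i, ω i * (ℓ i : ℝ)

noncomputable def mdot (m : Fin 2 → ℝ) (j : Z2) : ℝ := ∑ k, m k * (j k : ℝ)

/-- `π^⊤(ℓ) = ∑ k, ℓ k • j̄ k`. -/
def piT {ν : ℕ} (jb : Fin ν → Z2) (ℓ : Zn ν) : Z2 := fun k => ∑ i, ℓ i * jb i k

/-- `π(ς) = (j̄ 1 · ς, …, j̄ ν · ς)`. -/
noncomputable def piMap {ν : ℕ} (jb : Fin ν → Z2) (ς : Fin 2 → ℝ) : Fin ν → ℝ :=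
  fun i => ∑ k, (jb i k : ℝ) * ς k

/-- The wave vectors `j̄ 1, …, j̄ ν` span `ℝ²`. -/
def SpanningWaveVectors {ν : ℕ} (jb : Fin ν → Z2) : Prop :=
  ∃ i i' : Fin ν, jb i 0 * jb i' 1 - jb i 1 * jb i' 0 ≠ 0

/-- Quasi-periodic traveling wave, in Fourier coefficients:
`û(ℓ,j) = 0` whenever `π^⊤(ℓ) + j ≠ 0`. -/
def IsQPTW {ν : ℕ} (jb : Fin ν → Z2) (u : Idx ν → ℂ) : Prop :=
  ∀ p : Idx ν, piT jb p.1 + p.2 ≠ 0 → u p = 0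

/-- Zero average in `x`: the Fourier coefficients `û(ℓ,0)` vanish. -/
def ZeroAvgX {ν : ℕ} (u : Idx ν → ℂ) : Prop := ∀ ℓ : Zn ν, u (ℓ, 0) = 0

/-- Real-valuedness in Fourier coefficients. -/
def RealCoeff {ν : ℕ} (u : Idx ν → ℂ) : Prop :=
  ∀ p : Idx ν, u (-p.1, -p.2) = starRingEnd ℂ (u p)

/-- Sobolev norm `‖u‖_s` (as an extended real). -/
noncomputable def sobNorm {ν : ℕ} {E : Type*} [SeminormedAddCommGroup E]
    (s : ℝ) (u : Idx ν → E) : ℝ≥0∞ :=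
  (∑' p : Idx ν, ENNReal.ofReal (wt p ^ (2 * s)) * ((‖u p‖₊ : ℝ≥0∞)) ^ 2) ^ (1/2 : ℝ)

/-- `C^∞` smoothness = rapid decay of the Fourier coefficients. -/
def SmoothCoeff {ν : ℕ} (u : Idx ν → ℂ) : Prop := ∀ s : ℝ, sobNorm s u < ⊤

/-- Weighted (Lipschitz in the parameter `ω ∈ Λ`) Sobolev norm `‖u‖_s^{Lip(γ)}`. -/
noncomputable def sobNormLip {ν : ℕ} {E : Type*} [SeminormedAddCommGroup E]
    (γ : ℝ) (Λ : Set (Fin ν → ℝ)) (s : ℝ) (u : (Fin ν → ℝ) → Idx ν → E) : ℝ≥0∞ :=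
  (⨆ ω ∈ Λ, sobNorm s (u ω)) +
    ENNReal.ofReal γ * ⨆ ω₁ ∈ Λ, ⨆ ω₂ ∈ Λ,
      sobNorm (s - 1) (fun p => u ω₁ p - u ω₂ p) / ENNReal.ofReal (rnorm (ω₁ - ω₂))

/-- Symbol of `𝙻 = (−Δ)^{−1} ∂_{x₁}`. -/
noncomputable def Lfreq (j : Z2) : ℝ := if j = 0 then 0 else (j 0 : ℝ) / (znorm j) ^ 2

/-- The operator `𝙻 = (−Δ)^{−1} ∂_{x₁}` in Fourier coefficients. -/
noncomputable def Lsymb {ν : ℕ} (v : Idx ν → ℂ) : Idx ν → ℂ :=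
  fun p => Complex.I * (Lfreq p.2 : ℂ) * v p

/-- The operator `ω·∂_φ` in Fourier coefficients. -/
noncomputable def phiDer {ν : ℕ} (ω : Fin ν → ℝ) (v : Idx ν → ℂ) : Idx ν → ℂ :=
  fun p => Complex.I * ((ωdot ω p.1 : ℝ) : ℂ) * v p

/-- `B(j') ⋅ (i j'')` where `B(j') = (i/|j'|²)(−j'₂, j'₁)` is the Biot-Savart symbol. -/
noncomputable def bsDot (j' j'' : Z2) : ℂ :=
  if j' = 0 then 0
  else -((((-(j' 1 : ℝ)) * (j'' 0 : ℝ) + (j' 0 : ℝ) * (j'' 1 : ℝ)) / (znorm j') ^ 2 : ℝ) : ℂ)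

/-- Fourier coefficients of the nonlinearity `B[v]·∇w` (`B` the Biot-Savart operator). -/
noncomputable def nonlin {ν : ℕ} (v w : Idx ν → ℂ) : Idx ν → ℂ :=
  fun p => ∑' q : Idx ν, bsDot q.2 (p.2 - q.2) * v q * w (p.1 - q.1, p.2 - q.2)

/-- Fourier coefficients of the (vector valued) Biot-Savart velocity field `B[v]`. -/
noncomputable def biotSavartV {ν : ℕ} (v : Idx ν → ℂ) : Idx ν → Fin 2 → ℂ :=
  fun p k => if p.2 = 0 then 0 else
    Complex.I * ((((if k = 0 then -(p.2 1) else p.2 0 : ℤ) : ℝ) / (znorm p.2) ^ 2 : ℝ) : ℂ) * v p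

/-- The reference annulus `Ω := {1 ≤ |ω| ≤ 2}`. -/
def OmegaSet (ν : ℕ) : Set (Fin ν → ℝ) := {ω | 1 ≤ rnorm ω ∧ rnorm ω ≤ 2}

/-- Diophantine vectors `DC(γ,τ)`. -/
def DCset (ν : ℕ) (γ τ : ℝ) : Set (Fin ν → ℝ) :=
  {ω ∈ OmegaSet ν | ∀ ℓ : Zn ν, ℓ ≠ 0 → γ * bwt ℓ ^ (-τ) ≤ |ωdot ω ℓ|}

/-- The set `Ω_γ` of first order Melnikov non-resonance conditions. -/
def MelnikovSet {ν : ℕ} (jb : Fin ν → Z2) (β lam γ τ : ℝ) : Set (Fin ν → ℝ) :=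
  {ω ∈ DCset ν γ τ | ∀ (ℓ : Zn ν) (j : Z2), (ℓ, j) ≠ (0, 0) → piT jb ℓ + j = 0 →
    lam * γ * bwt ℓ ^ (-τ) ≤ |lam * ωdot ω ℓ + β * Lfreq j|}

/-- Matrix representation `R̂(ℓ)_j^{j'}` of (φ-dependent families of) linear operators. -/
abbrev OpMat (ν : ℕ) := Zn ν → Z2 → Z2 → ℂ

/-- The decay norm `|R|_{m,s}`. -/
noncomputable def decayNorm {ν : ℕ} (m s : ℝ) (R : OpMat ν) : ℝ≥0∞ :=
  ⨆ j' : Z2, ENNReal.ofReal (bwt j' ^ (-m)) *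
    (∑' q : Idx ν, ENNReal.ofReal (wt (q.1, q.2 - j') ^ (2 * s)) *
      ((‖R q.1 q.2 j'‖₊ : ℝ≥0∞)) ^ 2) ^ (1/2 : ℝ)

/-- The weighted decay norm `|R|_{m,s}^{Lip(γ)}` of a family `R(ω)`, `ω ∈ Λ`. -/
noncomputable def decayNormLip {ν : ℕ} (γ : ℝ) (Λ : Set (Fin ν → ℝ)) (m s : ℝ)
    (R : (Fin ν → ℝ) → OpMat ν) : ℝ≥0∞ :=
  (⨆ ω ∈ Λ, decayNorm m s (R ω)) +
    ENNReal.ofReal γ * ⨆ ω₁ ∈ Λ, ⨆ ω₂ ∈ Λ,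
      decayNorm m (s - 1) (fun ℓ j j' => R ω₁ ℓ j j' - R ω₂ ℓ j j') /
        ENNReal.ofReal (rnorm (ω₁ - ω₂))

/-- Composition of operators at the level of matrices. -/
noncomputable def opComp {ν : ℕ} (R Q : OpMat ν) : OpMat ν :=
  fun ℓ j j' => ∑' q : Idx ν, R (ℓ - q.1) j q.2 * Q q.1 q.2 j'

/-- Action of an operator (given by its matrix) on Fourier coefficients. -/
noncomputable def opApply {ν : ℕ} (R : OpMat ν) (u : Idx ν → ℂ) : Idx ν → ℂ :=
  fun p => ∑' q : Idx ν, R (p.1 - q.1) p.2 q.2 * u q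

/-- Matrix of the identity operator. -/
noncomputable def idMat (ν : ℕ) : OpMat ν := fun ℓ j j' => if ℓ = 0 ∧ j = j' then 1 else 0

/-- Momentum preserving operator, in matrix form. -/
def MomPresMat {ν : ℕ} (jb : Fin ν → Z2) (R : OpMat ν) : Prop :=
  ∀ ℓ j j', R ℓ j j' ≠ 0 → piT jb ℓ + j = j'

/-- `n`-fold composition `R^n`. -/
noncomputable def opPow {ν : ℕ} (R : OpMat ν) : ℕ → OpMat ν
  | 0 => idMat ν
  | n + 1 => opComp R (opPow R n)

/-- Exponential `exp(R) = Id + ∑_{n ≥ 1} R^n / n!`. -/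
noncomputable def expMat {ν : ℕ} (R : OpMat ν) : OpMat ν :=
  fun ℓ j j' => idMat ν ℓ j j' +
    ∑' n : ℕ, ((Nat.factorial (n + 1) : ℂ))⁻¹ * opPow R (n + 1) ℓ j j'


/-- The inverse `L_∞⁻¹` of the final diagonal normal form `λ ω·∂_φ + D_∞`, acting on
quasi-periodic traveling waves with zero average in `x`. -/
noncomputable def LinfInv {ν : ℕ} (jb : Fin ν → Z2) (lam : ℝ) (ω : Fin ν → ℝ)
    (μ : Z2 → ℂ) (h : Idx ν → ℂ) : Idx ν → ℂ :=
  fun p => if p.1 ≠ 0 ∧ p.2 ≠ 0 ∧ piT jb p.1 + p.2 = 0 then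
    h p / (Complex.I * (((lam * ωdot ω p.1 : ℝ)) : ℂ) + μ p.2)
  else 0

/-- The set `Λ_∞^γ` of first order Melnikov conditions for the final eigenvalues. -/
def LambdaInfSet {ν : ℕ} (jb : Fin ν → Z2) (lam γ τ : ℝ)
    (μ : (Fin ν → ℝ) → Z2 → ℂ) : Set (Fin ν → ℝ) :=
  {ω ∈ DCset ν (2 * γ) τ | ∀ (ℓ : Zn ν) (j : Z2), j ≠ 0 → piT jb ℓ + j = 0 →
    2 * lam * γ * bwt ℓ ^ (-τ)
      ≤ ‖Complex.I * (((lam * ωdot ω ℓ : ℝ)) : ℂ) + μ ω j‖}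

/-!
On the support of `L_∞⁻¹ h` the Melnikov condition defining `Λ_∞^γ` gives
`|iλ ω·ℓ + μ_∞(j)|⁻¹ ≤ (2λγ)⁻¹ ⟨ℓ,j⟩^τ`, so `L_∞⁻¹` is a Fourier multiplier losing `τ`
derivatives. For the dependence on `ω`, `h₁/d₁ - h₂/d₂ = (h₁ - h₂)/d₁ + h₂ (d₂ - d₁)/(d₁ d₂)`
costs two such factors times `|d₁ - d₂| ≤ (1 + C) λ ⟨ℓ,j⟩ |ω₁ - ω₂|`; here the smallness
`λ^{θ-1} γ⁻¹ ≤ 1` keeps the variation of `z_∞` below that of `λ ω·ℓ`. Altogether `2τ + 1`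
derivatives are lost. Since `‖·‖_s` is a weighted `ℓ²` norm (an `L²` norm for the counting
measure), such coefficientwise bounds pass to the norms by monotonicity and Minkowski.
-/

lemma one_le_wt {ν : ℕ} (p : Idx ν) : 1 ≤ wt p := le_max_left _ _

lemma wt_pos {ν : ℕ} (p : Idx ν) : 0 < wt p := one_pos.trans_le (one_le_wt p)

lemma bwt_pos {n : ℕ} (ℓ : Fin n → ℤ) : 0 < bwt ℓ := one_pos.trans_le (le_max_left _ _)

lemma one_le_znorm {n : ℕ} {ℓ : Fin n → ℤ} (hℓ : ℓ ≠ 0) : 1 ≤ znorm ℓ := by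
  obtain ⟨i, hi⟩ := Function.ne_iff.mp hℓ
  have hi' : (1 : ℝ) ≤ (ℓ i : ℝ) ^ 2 := by
    exact_mod_cast (one_le_sq_iff_one_le_abs _).mpr (Int.one_le_abs hi)
  exact Real.one_le_sqrt.mpr (hi'.trans (Finset.single_le_sum
    (f := fun k => (ℓ k : ℝ) ^ 2) (fun k _ => sq_nonneg _) (Finset.mem_univ i)))

lemma bwt_le_wt {ν : ℕ} (p : Idx ν) : bwt p.1 ≤ wt p :=
  max_le_max le_rfl (le_max_left _ _)

lemma znorm_le_wt {ν : ℕ} (p : Idx ν) : znorm p.1 ≤ wt p :=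
  (le_max_left _ _).trans (le_max_right _ _)

lemma ωdot_sub {n : ℕ} (ω₁ ω₂ : Fin n → ℝ) (ℓ : Fin n → ℤ) :
    ωdot ω₁ ℓ - ωdot ω₂ ℓ = ωdot (ω₁ - ω₂) ℓ := by
  simp only [ωdot, ← Finset.sum_sub_distrib, Pi.sub_apply, sub_mul]

lemma abs_ωdot_le {n : ℕ} (ω : Fin n → ℝ) (ℓ : Fin n → ℤ) :
    |ωdot ω ℓ| ≤ rnorm ω * znorm ℓ := by
  rw [rnorm, znorm, ← Real.sqrt_mul (Finset.sum_nonneg fun i _ => sq_nonneg _)]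
  exact Real.abs_le_sqrt (Finset.sum_mul_sq_le_sq_mul_sq _ _ _)

lemma piT_zero {ν : ℕ} (jb : Fin ν → Z2) : piT jb 0 = 0 := by
  funext k; simp [piT]

lemma norm_div_sub_div_le {𝕜 : Type*} [NormedField 𝕜] {x₁ x₂ d₁ d₂ : 𝕜} (hd₁ : d₁ ≠ 0)
    (hd₂ : d₂ ≠ 0) :
    ‖x₁ / d₁ - x₂ / d₂‖ ≤ ‖x₁ - x₂‖ * ‖d₁‖⁻¹ + ‖x₂‖ * ‖d₁ - d₂‖ * (‖d₁‖⁻¹ * ‖d₂‖⁻¹) := by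
  have hsplit : x₁ / d₁ - x₂ / d₂ = (x₁ - x₂) / d₁ + x₂ * (d₂ - d₁) / (d₁ * d₂) := by
    field_simp
    ring
  rw [hsplit, ← norm_sub_rev d₂, ← norm_inv, ← norm_inv, ← norm_mul, ← norm_mul, ← norm_mul,
    ← norm_mul, ← mul_inv, ← div_eq_mul_inv, ← div_eq_mul_inv]
  exact norm_add_le _ _

lemma inv_two_mul_mul_le {C lam γ : ℝ} (hC : 0 ≤ C) (hlam : 0 ≤ lam) (hγ : 0 ≤ γ) :
    (2 * lam * γ)⁻¹ ≤ (1 + C) * lam⁻¹ * γ⁻¹ := by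
  rw [mul_inv, mul_inv, mul_assoc, mul_assoc]
  exact mul_le_mul_of_nonneg_right (by linarith) (by positivity)

section Sobolev

variable {ν : ℕ} {E F G : Type*} [SeminormedAddCommGroup E] [SeminormedAddCommGroup F]
  [SeminormedAddCommGroup G]

lemma sobNorm_eq_eLpNorm (s : ℝ) (u : Idx ν → E) :
    sobNorm s u = eLpNorm (fun p => wt p ^ s * ‖u p‖) 2 Measure.count := by
  rw [eLpNorm_eq_lintegral_rpow_enorm_toReal (by norm_num) (by norm_num), lintegral_count, sobNorm]
  norm_num
  congr 2 with p
  have hw := (wt_pos p).le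
  rw [Real.enorm_of_nonneg (Real.rpow_nonneg hw s), enorm_eq_nnnorm, mul_pow,
    ← ENNReal.ofReal_pow (Real.rpow_nonneg hw s), ← Real.rpow_natCast, ← Real.rpow_mul hw]
  norm_num [mul_comm]

lemma sobNorm_le_add (s : ℝ) {u : Idx ν → E} {v : Idx ν → F} {w : Idx ν → G}
    (h : ∀ p, ‖u p‖ ≤ ‖v p‖ + ‖w p‖) : sobNorm s u ≤ sobNorm s v + sobNorm s w := by
  simp only [sobNorm_eq_eLpNorm]
  calc eLpNorm (fun p => wt p ^ s * ‖u p‖) 2 Measure.count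
      ≤ eLpNorm ((fun p => wt p ^ s * ‖v p‖) + fun p => wt p ^ s * ‖w p‖) 2 Measure.count :=
        eLpNorm_mono_real fun p => by
          rw [Pi.add_apply, ← mul_add, norm_mul, norm_norm, Real.norm_of_nonneg
            (Real.rpow_nonneg (wt_pos p).le s)]
          exact mul_le_mul_of_nonneg_left (h p) (Real.rpow_nonneg (wt_pos p).le s)
    _ ≤ _ := eLpNorm_add_le (measurable_of_countable _).aestronglyMeasurable
        (measurable_of_countable _).aestronglyMeasurable one_le_two

lemma sobNorm_le_of_norm_le {c a : ℝ} (hc : 0 ≤ c) (s : ℝ) {u : Idx ν → E} {v : Idx ν → F}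
    (h : ∀ p, ‖u p‖ ≤ c * wt p ^ a * ‖v p‖) :
    sobNorm s u ≤ ENNReal.ofReal c * sobNorm (s + a) v := by
  rw [sobNorm_eq_eLpNorm, sobNorm_eq_eLpNorm, ← Real.enorm_of_nonneg hc, ← eLpNorm_const_smul]
  refine eLpNorm_mono_real fun p => ?_
  have hw := wt_pos p
  rw [norm_mul, norm_norm, Real.norm_of_nonneg (Real.rpow_nonneg hw.le s), Pi.smul_apply,
    smul_eq_mul, Real.rpow_add hw]
  calc wt p ^ s * ‖u p‖ ≤ wt p ^ s * (c * wt p ^ a * ‖v p‖) :=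
        mul_le_mul_of_nonneg_left (h p) (Real.rpow_nonneg hw.le s)
    _ = c * (wt p ^ s * wt p ^ a * ‖v p‖) := by ring

lemma sobNorm_le_of_norm_le_add {c₁ c₂ a b : ℝ} (hc₁ : 0 ≤ c₁) (hc₂ : 0 ≤ c₂) (s : ℝ)
    {u : Idx ν → E} {v : Idx ν → F} {w : Idx ν → G}
    (h : ∀ p, ‖u p‖ ≤ c₁ * wt p ^ a * ‖v p‖ + c₂ * wt p ^ b * ‖w p‖) :
    sobNorm s u ≤ ENNReal.ofReal c₁ * sobNorm (s + a) v + ENNReal.ofReal c₂ * sobNorm (s + b) w :=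
  (sobNorm_le_add s (v := fun p => c₁ * wt p ^ a * ‖v p‖) (w := fun p => c₂ * wt p ^ b * ‖w p‖)
    fun p => (h p).trans (add_le_add (Real.le_norm_self _) (Real.le_norm_self _))).trans <|
    add_le_add
      (sobNorm_le_of_norm_le hc₁ s fun p =>
        (Real.norm_of_nonneg (by have := wt_pos p; positivity)).le)
      (sobNorm_le_of_norm_le hc₂ s fun p =>
        (Real.norm_of_nonneg (by have := wt_pos p; positivity)).le)

lemma sobNorm_div_le_of_norm_le_add {c d a r : ℝ} (hc : 0 ≤ c) (hd : 0 ≤ d) (hr : 0 ≤ r)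
    (s : ℝ) {u : Idx ν → E} {v : Idx ν → F} {w : Idx ν → G}
    (h : ∀ p, ‖u p‖ ≤ c * wt p ^ a * ‖v p‖ + d * r * wt p ^ (a + 1) * ‖w p‖) :
    sobNorm (s - 1) u / ENNReal.ofReal r
      ≤ ENNReal.ofReal c * (sobNorm (s + a - 1) v / ENNReal.ofReal r)
        + ENNReal.ofReal d * sobNorm (s + a) w := by
  have hsplit := sobNorm_le_of_norm_le_add hc (by positivity) (s - 1) h
  rw [sub_add_eq_add_sub, show s - 1 + (a + 1) = s + a by ring, ENNReal.ofReal_mul hd,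
    mul_right_comm] at hsplit
  refine (ENNReal.div_le_div_right hsplit _).trans ?_
  rw [ENNReal.add_div, mul_div_assoc, mul_div_assoc]
  exact add_le_add le_rfl (mul_le_of_le_one_right' ENNReal.div_self_le_one)

lemma sobNormLip_le_of_norm_le {γ c a : ℝ} (hγ : 0 ≤ γ) (hc : 0 ≤ c) (Λ : Set (Fin ν → ℝ))
    (s : ℝ) {u : (Fin ν → ℝ) → Idx ν → E} {v : (Fin ν → ℝ) → Idx ν → F}
    (hu : ∀ ω ∈ Λ, ∀ p, ‖u ω p‖ ≤ c * wt p ^ a * ‖v ω p‖)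
    (hdiff : ∀ ω₁ ∈ Λ, ∀ ω₂ ∈ Λ, ∀ p, ‖u ω₁ p - u ω₂ p‖ ≤ c * wt p ^ a * ‖v ω₁ p - v ω₂ p‖
      + c * γ⁻¹ * rnorm (ω₁ - ω₂) * wt p ^ (a + 1) * ‖v ω₂ p‖) :
    sobNormLip γ Λ s u ≤ ENNReal.ofReal (2 * c) * sobNormLip γ Λ (s + a) v := by
  set S := ⨆ ω ∈ Λ, sobNorm (s + a) (v ω)
  set T := ⨆ ω₁ ∈ Λ, ⨆ ω₂ ∈ Λ,
    sobNorm (s + a - 1) (fun p => v ω₁ p - v ω₂ p) / ENNReal.ofReal (rnorm (ω₁ - ω₂))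
  have hS : ∀ ω ∈ Λ, sobNorm (s + a) (v ω) ≤ S := fun ω hω =>
    le_iSup₂ (f := fun ω (_ : ω ∈ Λ) => sobNorm (s + a) (v ω)) ω hω
  have hsup : (⨆ ω ∈ Λ, sobNorm s (u ω)) ≤ ENNReal.ofReal c * S :=
    iSup₂_le fun ω hω => (sobNorm_le_of_norm_le hc s (hu ω hω)).trans (by gcongr; exact hS ω hω)
  have hlip : (⨆ ω₁ ∈ Λ, ⨆ ω₂ ∈ Λ,
      sobNorm (s - 1) (fun p => u ω₁ p - u ω₂ p) / ENNReal.ofReal (rnorm (ω₁ - ω₂)))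
      ≤ ENNReal.ofReal c * T + ENNReal.ofReal (c * γ⁻¹) * S := by
    refine iSup₂_le fun ω₁ hω₁ => iSup₂_le fun ω₂ hω₂ => ?_
    refine (sobNorm_div_le_of_norm_le_add hc (by positivity) (Real.sqrt_nonneg _) s
      (hdiff ω₁ hω₁ ω₂ hω₂)).trans ?_
    gcongr
    · exact le_iSup₂_of_le ω₁ hω₁ (le_iSup₂_of_le (f := fun ω₂ (_ : ω₂ ∈ Λ) =>
        sobNorm (s + a - 1) (fun p => v ω₁ p - v ω₂ p) / ENNReal.ofReal (rnorm (ω₁ - ω₂)))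
        ω₂ hω₂ le_rfl)
    · exact hS ω₂ hω₂
  have hγc : ENNReal.ofReal γ * ENNReal.ofReal (c * γ⁻¹) ≤ ENNReal.ofReal c := by
    rw [← ENNReal.ofReal_mul hγ, mul_left_comm]
    exact ENNReal.ofReal_le_ofReal (mul_le_of_le_one_right hc (mul_inv_le_one_of_le₀ le_rfl hγ))
  calc sobNormLip γ Λ s u ≤ ENNReal.ofReal c * S
        + ENNReal.ofReal γ * (ENNReal.ofReal c * T + ENNReal.ofReal (c * γ⁻¹) * S) := by
        unfold sobNormLip
        gcongr
    _ = ENNReal.ofReal c * S + ENNReal.ofReal γ * ENNReal.ofReal (c * γ⁻¹) * S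
        + ENNReal.ofReal c * (ENNReal.ofReal γ * T) := by ring
    _ ≤ ENNReal.ofReal c * S + ENNReal.ofReal c * S + ENNReal.ofReal c * (ENNReal.ofReal γ * T)
        + ENNReal.ofReal c * (ENNReal.ofReal γ * T) := le_self_add.trans' (by gcongr)
    _ = ENNReal.ofReal (2 * c) * (S + ENNReal.ofReal γ * T) := by
        rw [two_mul, ENNReal.ofReal_add hc hc]
        ring

end Sobolev

section NormalForm

variable {ν : ℕ} {jb : Fin ν → Z2} {lam γ τ : ℝ} {μ : (Fin ν → ℝ) → Z2 → ℂ}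

noncomputable def normalFormSymbol (lam : ℝ) (ω : Fin ν → ℝ) (μ : Z2 → ℂ) (p : Idx ν) : ℂ :=
  Complex.I * ((lam * ωdot ω p.1 : ℝ) : ℂ) + μ p.2

lemma LinfInv_apply (jb : Fin ν → Z2) (lam : ℝ) (ω : Fin ν → ℝ) (μ : Z2 → ℂ) (h : Idx ν → ℂ)
    (p : Idx ν) :
    LinfInv jb lam ω μ h p = if p.1 ≠ 0 ∧ p.2 ≠ 0 ∧ piT jb p.1 + p.2 = 0 then
      h p / normalFormSymbol lam ω μ p else 0 := rfl

lemma isQPTW_LinfInv (jb : Fin ν → Z2) (lam : ℝ) (ω : Fin ν → ℝ) (μ : Z2 → ℂ)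
    (h : Idx ν → ℂ) : IsQPTW jb (LinfInv jb lam ω μ h) :=
  fun _ hp => if_neg fun hc => hp hc.2.2

lemma zeroAvgX_LinfInv (jb : Fin ν → Z2) (lam : ℝ) (ω : Fin ν → ℝ) (μ : Z2 → ℂ)
    (h : Idx ν → ℂ) : ZeroAvgX (LinfInv jb lam ω μ h) :=
  fun _ => if_neg fun hc => hc.2.1 rfl

lemma normalFormSymbol_ne_zero (hlam : 0 < lam) (hγ : 0 < γ) {ω : Fin ν → ℝ}
    (hω : ω ∈ LambdaInfSet jb lam γ τ μ) {p : Idx ν} (hj : p.2 ≠ 0)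
    (hmom : piT jb p.1 + p.2 = 0) : normalFormSymbol lam ω (μ ω) p ≠ 0 := by
  have hpos : 0 < 2 * lam * γ * bwt p.1 ^ (-τ) :=
    mul_pos (by positivity) (Real.rpow_pos_of_pos (bwt_pos p.1) _)
  exact norm_pos_iff.mp (hpos.trans_le (hω.2 p.1 p.2 hj hmom))

lemma inv_norm_normalFormSymbol_le (hτ : 0 ≤ τ) (hlam : 0 < lam) (hγ : 0 < γ)
    {ω : Fin ν → ℝ} (hω : ω ∈ LambdaInfSet jb lam γ τ μ) {p : Idx ν} (hj : p.2 ≠ 0)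
    (hmom : piT jb p.1 + p.2 = 0) :
    ‖normalFormSymbol lam ω (μ ω) p‖⁻¹ ≤ (2 * lam * γ)⁻¹ * wt p ^ τ := by
  have hwt : wt p ^ (-τ) ≤ bwt p.1 ^ (-τ) :=
    Real.rpow_le_rpow_of_nonpos (bwt_pos p.1) (bwt_le_wt p) (neg_nonpos.mpr hτ)
  have hlow : 2 * lam * γ * wt p ^ (-τ) ≤ ‖normalFormSymbol lam ω (μ ω) p‖ :=
    (mul_le_mul_of_nonneg_left hwt (by positivity)).trans (hω.2 p.1 p.2 hj hmom)
  have hpos : 0 < 2 * lam * γ * wt p ^ (-τ) :=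
    mul_pos (by positivity) (Real.rpow_pos_of_pos (wt_pos p) _)
  calc ‖normalFormSymbol lam ω (μ ω) p‖⁻¹ ≤ (2 * lam * γ * wt p ^ (-τ))⁻¹ := inv_anti₀ hpos hlow
    _ = (2 * lam * γ)⁻¹ * wt p ^ τ := by rw [mul_inv, Real.rpow_neg (wt_pos p).le, inv_inv]

lemma norm_LinfInv_le (hτ : 0 ≤ τ) (hlam : 0 < lam) (hγ : 0 < γ) {ω : Fin ν → ℝ}
    (hω : ω ∈ LambdaInfSet jb lam γ τ μ) (h : Idx ν → ℂ) (p : Idx ν) :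
    ‖LinfInv jb lam ω (μ ω) h p‖ ≤ (2 * lam * γ)⁻¹ * wt p ^ τ * ‖h p‖ := by
  rw [LinfInv_apply]
  split_ifs with hp
  · rw [norm_div, div_eq_mul_inv, mul_comm]
    exact mul_le_mul_of_nonneg_right
      (inv_norm_normalFormSymbol_le hτ hlam hγ hω hp.2.1 hp.2.2) (norm_nonneg _)
  · rw [norm_zero]
    exact mul_nonneg (mul_nonneg (by positivity) (Real.rpow_nonneg (wt_pos p).le τ))
      (norm_nonneg _)

lemma normalFormSymbol_mul_LinfInv (hlam : 0 < lam) (hγ : 0 < γ) {ω : Fin ν → ℝ}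
    (hω : ω ∈ LambdaInfSet jb lam γ τ μ) {h : Idx ν → ℂ} (hQ : IsQPTW jb h)
    (hZ : ZeroAvgX h) (p : Idx ν) :
    normalFormSymbol lam ω (μ ω) p * LinfInv jb lam ω (μ ω) h p = h p := by
  rw [LinfInv_apply]
  split_ifs with hp
  · exact mul_div_cancel₀ _ (normalFormSymbol_ne_zero hlam hγ hω hp.2.1 hp.2.2)
  · rw [mul_zero, eq_comm]
    by_cases hmom : piT jb p.1 + p.2 = 0
    · by_cases hj : p.2 = 0
      · exact (congrArg h (Prod.ext rfl hj : p = (p.1, 0))).trans (hZ p.1)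
      · have hℓ : p.1 = 0 := not_not.mp fun hℓ => hp ⟨hℓ, hj, hmom⟩
        rw [hℓ, piT_zero, zero_add] at hmom
        exact absurd hmom hj
    · exact hQ p hmom

lemma norm_normalFormSymbol_sub_le {β θ C₁ : ℝ} {z : (Fin ν → ℝ) → Z2 → ℂ} (hlam : 1 ≤ lam)
    (hsmall : lam ^ (θ - 1) * γ⁻¹ ≤ 1) (hC₁ : 0 ≤ C₁)
    (hμ : ∀ ω (j : Z2), μ ω j = Complex.I * (β : ℂ) * ((Lfreq j : ℝ) : ℂ) + z ω j)
    {ω₁ ω₂ : Fin ν → ℝ} {p : Idx ν} (hj : p.2 ≠ 0)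
    (hz : ‖z ω₁ p.2 - z ω₂ p.2‖ ≤ C₁ * lam ^ θ * γ⁻¹ * (znorm p.2)⁻¹ * rnorm (ω₁ - ω₂)) :
    ‖normalFormSymbol lam ω₁ (μ ω₁) p - normalFormSymbol lam ω₂ (μ ω₂) p‖
      ≤ (1 + C₁) * lam * wt p * rnorm (ω₁ - ω₂) := by
  have hlam0 : 0 < lam := one_pos.trans_le hlam
  have hΔ : 0 ≤ rnorm (ω₁ - ω₂) := Real.sqrt_nonneg _
  have hsymb : normalFormSymbol lam ω₁ (μ ω₁) p - normalFormSymbol lam ω₂ (μ ω₂) p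
      = Complex.I * ((lam * ωdot (ω₁ - ω₂) p.1 : ℝ) : ℂ) + (z ω₁ p.2 - z ω₂ p.2) := by
    simp only [normalFormSymbol, hμ, ← ωdot_sub]
    push_cast
    ring
  have hphase : ‖Complex.I * ((lam * ωdot (ω₁ - ω₂) p.1 : ℝ) : ℂ)‖
      ≤ lam * wt p * rnorm (ω₁ - ω₂) := by
    rw [norm_mul, Complex.norm_I, one_mul, Complex.norm_real, Real.norm_eq_abs, abs_mul,
      abs_of_pos hlam0, mul_assoc]
    refine mul_le_mul_of_nonneg_left ((abs_ωdot_le _ _).trans ?_) hlam0.le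
    rw [mul_comm]
    exact mul_le_mul_of_nonneg_right (znorm_le_wt p) hΔ
  have hθ : lam ^ θ * γ⁻¹ ≤ lam := by
    calc lam ^ θ * γ⁻¹ = lam * (lam ^ (θ - 1) * γ⁻¹) := by
          rw [Real.rpow_sub hlam0, Real.rpow_one]; field_simp
      _ ≤ lam := mul_le_of_le_one_right hlam0.le hsmall
  have hz' : ‖z ω₁ p.2 - z ω₂ p.2‖ ≤ C₁ * lam * wt p * rnorm (ω₁ - ω₂) := by
    refine hz.trans ?_
    have hj' : (znorm p.2)⁻¹ ≤ wt p :=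
      (inv_le_one_of_one_le₀ (one_le_znorm hj)).trans (one_le_wt p)
    have hθj : lam ^ θ * γ⁻¹ * (znorm p.2)⁻¹ ≤ lam * wt p :=
      mul_le_mul hθ hj' (inv_nonneg.mpr (Real.sqrt_nonneg _)) hlam0.le
    calc C₁ * lam ^ θ * γ⁻¹ * (znorm p.2)⁻¹ * rnorm (ω₁ - ω₂)
        = C₁ * (lam ^ θ * γ⁻¹ * (znorm p.2)⁻¹) * rnorm (ω₁ - ω₂) := by ring
      _ ≤ C₁ * (lam * wt p) * rnorm (ω₁ - ω₂) :=
          mul_le_mul_of_nonneg_right (mul_le_mul_of_nonneg_left hθj hC₁) hΔ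
      _ = C₁ * lam * wt p * rnorm (ω₁ - ω₂) := by ring
  rw [hsymb]
  calc _ ≤ _ := norm_add_le _ _
    _ ≤ lam * wt p * rnorm (ω₁ - ω₂) + C₁ * lam * wt p * rnorm (ω₁ - ω₂) :=
        add_le_add hphase hz'
    _ = (1 + C₁) * lam * wt p * rnorm (ω₁ - ω₂) := by ring

lemma norm_LinfInv_sub_le {β θ C₁ : ℝ} {z : (Fin ν → ℝ) → Z2 → ℂ} (hτ : 0 ≤ τ)
    (hlam : 1 ≤ lam) (hγ : 0 < γ) (hsmall : lam ^ (θ - 1) * γ⁻¹ ≤ 1) (hC₁ : 0 ≤ C₁)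
    (hμ : ∀ ω (j : Z2), μ ω j = Complex.I * (β : ℂ) * ((Lfreq j : ℝ) : ℂ) + z ω j)
    {ω₁ ω₂ : Fin ν → ℝ} (hω₁ : ω₁ ∈ LambdaInfSet jb lam γ τ μ)
    (hω₂ : ω₂ ∈ LambdaInfSet jb lam γ τ μ)
    (hz : ∀ j : Z2, j ≠ 0 →
      ‖z ω₁ j - z ω₂ j‖ ≤ C₁ * lam ^ θ * γ⁻¹ * (znorm j)⁻¹ * rnorm (ω₁ - ω₂))
    (h₁ h₂ : Idx ν → ℂ) (p : Idx ν) :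
    ‖LinfInv jb lam ω₁ (μ ω₁) h₁ p - LinfInv jb lam ω₂ (μ ω₂) h₂ p‖
      ≤ (1 + C₁) * lam⁻¹ * γ⁻¹ * wt p ^ (2 * τ + 1) * ‖h₁ p - h₂ p‖
        + (1 + C₁) * lam⁻¹ * γ⁻¹ * γ⁻¹ * rnorm (ω₁ - ω₂) * wt p ^ (2 * τ + 1 + 1) * ‖h₂ p‖ := by
  have hlam0 : 0 < lam := one_pos.trans_le hlam
  have hΔ : 0 ≤ rnorm (ω₁ - ω₂) := Real.sqrt_nonneg _
  set c := (1 + C₁) * lam⁻¹ * γ⁻¹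
  set W := wt p
  have hW : 1 ≤ W := one_le_wt p
  set r := (2 * lam * γ)⁻¹ * W ^ τ
  have hr : r ≤ c * W ^ (2 * τ + 1) := by
    exact mul_le_mul (inv_two_mul_mul_le hC₁ hlam0.le hγ.le)
      (Real.rpow_le_rpow_of_exponent_le hW (by linarith)) (by positivity) (by positivity)
  have hr2 : (1 + C₁) * lam * W * (r * r) ≤ c * γ⁻¹ * W ^ (2 * τ + 1 + 1) := by
    have hW0 : 0 < W := wt_pos p
    calc (1 + C₁) * lam * W * (r * r) = c * γ⁻¹ * W ^ (2 * τ + 1) / 4 := by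
          rw [show 2 * τ + 1 = τ + τ + 1 by ring, Real.rpow_add hW0, Real.rpow_add hW0,
            Real.rpow_one]
          simp only [c, r]
          field_simp
          ring
      _ ≤ c * γ⁻¹ * W ^ (2 * τ + 1) := div_le_self (by positivity) (by norm_num)
      _ ≤ c * γ⁻¹ * W ^ (2 * τ + 1 + 1) := by
          gcongr
          linarith
  rw [LinfInv_apply, LinfInv_apply]
  split_ifs with hp
  · obtain ⟨-, hj, hmom⟩ := hp
    calc _ ≤ _ := norm_div_sub_div_le (normalFormSymbol_ne_zero hlam0 hγ hω₁ hj hmom)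
          (normalFormSymbol_ne_zero hlam0 hγ hω₂ hj hmom)
      _ ≤ ‖h₁ p - h₂ p‖ * r + ‖h₂ p‖ * ((1 + C₁) * lam * W * rnorm (ω₁ - ω₂)) * (r * r) := by
          gcongr
          · exact inv_norm_normalFormSymbol_le hτ hlam0 hγ hω₁ hj hmom
          · exact norm_normalFormSymbol_sub_le hlam hsmall hC₁ hμ hj (hz p.2 hj)
          · exact inv_norm_normalFormSymbol_le hτ hlam0 hγ hω₁ hj hmom
          · exact inv_norm_normalFormSymbol_le hτ hlam0 hγ hω₂ hj hmom
      _ = ‖h₁ p - h₂ p‖ * r + (‖h₂ p‖ * rnorm (ω₁ - ω₂)) * ((1 + C₁) * lam * W * (r * r)) := by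
          ring
      _ ≤ ‖h₁ p - h₂ p‖ * (c * W ^ (2 * τ + 1))
          + (‖h₂ p‖ * rnorm (ω₁ - ω₂)) * (c * γ⁻¹ * W ^ (2 * τ + 1 + 1)) := by gcongr
      _ = _ := by ring
  · rw [sub_self, norm_zero]
    have := wt_pos p
    positivity

end NormalForm

theorem final_normal_form_inversion_general
    {ν : ℕ} (hν : 2 ≤ ν) (jb : Fin ν → Z2)
    (τ γ lam β θ : ℝ)
    (hτ : (ν : ℝ) - 1 < τ) (hγ₀ : 0 < γ) (hlam : 1 ≤ lam)
    (hsmall : lam ^ (θ - 1) * γ⁻¹ ≤ 1)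
    (C₁ : ℝ) (hC₁ : 0 < C₁)
    (μ : (Fin ν → ℝ) → Z2 → ℂ) (z : (Fin ν → ℝ) → Z2 → ℂ)
    (hμ : ∀ ω (j : Z2), μ ω j = Complex.I * (β : ℂ) * ((Lfreq j : ℝ) : ℂ) + z ω j)
    (hz_lip : ∀ ω₁ ∈ DCset ν (2 * γ) τ, ∀ ω₂ ∈ DCset ν (2 * γ) τ, ∀ j : Z2, j ≠ 0 →
      ‖z ω₁ j - z ω₂ j‖ ≤ C₁ * lam ^ θ * γ⁻¹ * (znorm j)⁻¹ * rnorm (ω₁ - ω₂)) :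
    ∃ C' : ℝ, 0 < C' ∧
      -- pointwise (in `ω`) statements
      (∀ ω ∈ LambdaInfSet jb lam γ τ μ, ∀ h : Idx ν → ℂ,
        IsQPTW jb h → ZeroAvgX h →
          IsQPTW jb (LinfInv jb lam ω (μ ω) h) ∧
          ZeroAvgX (LinfInv jb lam ω (μ ω) h) ∧
          -- `(λ ω·∂_φ + D_∞)(L_∞⁻¹ h) = h`
          (∀ p : Idx ν,
            Complex.I * (((lam * ωdot ω p.1 : ℝ)) : ℂ) * LinfInv jb lam ω (μ ω) h p
              + μ ω p.2 * LinfInv jb lam ω (μ ω) h p = h p) ∧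
          -- `‖L_∞⁻¹ h‖_s ≤ C' λ⁻¹ γ⁻¹ ‖h‖_{s+τ}`
          (∀ s : ℝ, 0 ≤ s →
            sobNorm s (LinfInv jb lam ω (μ ω) h)
              ≤ ENNReal.ofReal (C' * lam⁻¹ * γ⁻¹) * sobNorm (s + τ) h)) ∧
      -- statement for families `h(·;ω)`
      (∀ h : (Fin ν → ℝ) → Idx ν → ℂ,
        (∀ ω ∈ LambdaInfSet jb lam γ τ μ, IsQPTW jb (h ω) ∧ ZeroAvgX (h ω)) →
        ∀ s : ℝ, 0 ≤ s →
          sobNormLip γ (LambdaInfSet jb lam γ τ μ) s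
              (fun ω => LinfInv jb lam ω (μ ω) (h ω))
            ≤ ENNReal.ofReal (C' * lam⁻¹ * γ⁻¹) *
                sobNormLip γ (LambdaInfSet jb lam γ τ μ) (s + 2 * τ + 1) h) := by
  have hτ₀ : 0 ≤ τ := by
    have : (2 : ℝ) ≤ ν := by exact_mod_cast hν
    linarith
  have hlam₀ : 0 < lam := one_pos.trans_le hlam
  have hinv := inv_two_mul_mul_le hC₁.le hlam₀.le hγ₀.le
  refine ⟨2 * (1 + C₁), by positivity, fun ω hω h hQ hZ => ⟨isQPTW_LinfInv jb lam ω (μ ω) h,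
    zeroAvgX_LinfInv jb lam ω (μ ω) h, fun p => ?_, fun s _ => ?_⟩, fun h _ s _ => ?_⟩
  · rw [← add_mul]
    exact normalFormSymbol_mul_LinfInv hlam₀ hγ₀ hω hQ hZ p
  · refine (sobNorm_le_of_norm_le (by positivity) s (norm_LinfInv_le hτ₀ hlam₀ hγ₀ hω h)).trans ?_
    gcongr
    linarith [show 0 ≤ (1 + C₁) * lam⁻¹ * γ⁻¹ by positivity]
  · have hdiff := fun ω₁ (hω₁ : ω₁ ∈ LambdaInfSet jb lam γ τ μ) ω₂
        (hω₂ : ω₂ ∈ LambdaInfSet jb lam γ τ μ) => norm_LinfInv_sub_le hτ₀ hlam hγ₀ hsmall hC₁.le hμ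
          hω₁ hω₂ (hz_lip ω₁ hω₁.1 ω₂ hω₂.1)
    have hLip := sobNormLip_le_of_norm_le hγ₀.le (by positivity) _ s
      (u := fun ω => LinfInv jb lam ω (μ ω) (h ω))
      (fun ω hω p => (norm_LinfInv_le hτ₀ hlam₀ hγ₀ hω (h ω) p).trans <|
        mul_le_mul_of_nonneg_right (mul_le_mul hinv
          (Real.rpow_le_rpow_of_exponent_le (one_le_wt p) (by linarith))
          (Real.rpow_nonneg (wt_pos p).le _) (by positivity)) (norm_nonneg _))
      (fun ω₁ hω₁ ω₂ hω₂ => hdiff ω₁ hω₁ ω₂ hω₂ (h ω₁) (h ω₂))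
    convert hLip using 3 <;> ring

/-- Lemma 7.1 of the paper: for `ω ∈ Λ_∞^γ` the operator `L_∞⁻¹`
produces quasi-periodic traveling waves, inverts `λ ω·∂_φ + D_∞`, and satisfies
`‖L_∞⁻¹ h‖_s ≤ C' λ⁻¹ γ⁻¹ ‖h‖_{s+τ}` pointwise in `ω` and
`‖L_∞⁻¹ h‖_s^{Lip(γ)} ≤ C' λ⁻¹ γ⁻¹ ‖h‖_{s+2τ+1}^{Lip(γ)}` for families. -/
theorem final_normal_form_inversion
    {ν : ℕ} (hν : 2 ≤ ν) (jb : Fin ν → Z2) (hjb : SpanningWaveVectors jb)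
    (τ γ lam β θ : ℝ)
    (hτ : (ν : ℝ) - 1 < τ) (hγ₀ : 0 < γ) (hγ₁ : γ < 1) (hlam : 1 ≤ lam)
    (hθ : θ < 1) (hsmall : lam ^ (θ - 1) * γ⁻¹ ≤ 1)
    (C₁ : ℝ) (hC₁ : 0 < C₁)
    (μ : (Fin ν → ℝ) → Z2 → ℂ) (z : (Fin ν → ℝ) → Z2 → ℂ)
    (hμ : ∀ ω (j : Z2), μ ω j = Complex.I * (β : ℂ) * ((Lfreq j : ℝ) : ℂ) + z ω j)
    (hz_sup : ∀ ω ∈ DCset ν (2 * γ) τ, ∀ j : Z2, j ≠ 0 →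
      ‖z ω j‖ ≤ C₁ * lam ^ θ * (znorm j)⁻¹)
    (hz_lip : ∀ ω₁ ∈ DCset ν (2 * γ) τ, ∀ ω₂ ∈ DCset ν (2 * γ) τ, ∀ j : Z2, j ≠ 0 →
      ‖z ω₁ j - z ω₂ j‖ ≤ C₁ * lam ^ θ * γ⁻¹ * (znorm j)⁻¹ * rnorm (ω₁ - ω₂)) :
    ∃ C' : ℝ, 0 < C' ∧
      -- pointwise (in `ω`) statements
      (∀ ω ∈ LambdaInfSet jb lam γ τ μ, ∀ h : Idx ν → ℂ,
        IsQPTW jb h → ZeroAvgX h →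
          IsQPTW jb (LinfInv jb lam ω (μ ω) h) ∧
          ZeroAvgX (LinfInv jb lam ω (μ ω) h) ∧
          -- `(λ ω·∂_φ + D_∞)(L_∞⁻¹ h) = h`
          (∀ p : Idx ν,
            Complex.I * (((lam * ωdot ω p.1 : ℝ)) : ℂ) * LinfInv jb lam ω (μ ω) h p
              + μ ω p.2 * LinfInv jb lam ω (μ ω) h p = h p) ∧
          -- `‖L_∞⁻¹ h‖_s ≤ C' λ⁻¹ γ⁻¹ ‖h‖_{s+τ}`
          (∀ s : ℝ, 0 ≤ s →
            sobNorm s (LinfInv jb lam ω (μ ω) h)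
              ≤ ENNReal.ofReal (C' * lam⁻¹ * γ⁻¹) * sobNorm (s + τ) h)) ∧
      -- statement for families `h(·;ω)`
      (∀ h : (Fin ν → ℝ) → Idx ν → ℂ,
        (∀ ω ∈ LambdaInfSet jb lam γ τ μ, IsQPTW jb (h ω) ∧ ZeroAvgX (h ω)) →
        ∀ s : ℝ, 0 ≤ s →
          sobNormLip γ (LambdaInfSet jb lam γ τ μ) s
              (fun ω => LinfInv jb lam ω (μ ω) (h ω))
            ≤ ENNReal.ofReal (C' * lam⁻¹ * γ⁻¹) *
                sobNormLip γ (LambdaInfSet jb lam γ τ μ) (s + 2 * τ + 1) h) :=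
  final_normal_form_inversion_general hν jb τ γ lam β θ hτ hγ₀ hlam hsmall C₁ hC₁ μ z hμ hz_lip

end BetaPlane
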